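/- Let p be a prime and let H_p = {(a,b,0) ∈ G_p : a, b ∈ ℤ}. Let K be any group and ι : G_p → K an injective group homomorphism such that ι(H_p) is a normal subgroup of K. Define τ : K → ℂ by τ(g) = 1 if g ∈ ι(H_p) and τ(g) = 0 otherwise. Then τ is not a pointwise limit of finite-dimensional traces of K: there is no sequence of positive integers (n_k) and group homomorphisms σ_k : K → U(n_k) such that Tr_{n_k}(σ_k(g)) → τ(g) for every g ∈ K. -/

import Mathlib

open Filter Topology

/-- `ℤ[1/p]` as an additive subgroup of `ℚ`: rationals of the form `k / p^n`. -/
def Zp (p : ℕ) : AddSubgroup ℚ where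
  carrier := {q : ℚ | ∃ (k : ℤ) (n : ℕ), q * (p : ℚ) ^ n = (k : ℚ)}
  zero_mem' := ⟨0, 0, by norm_num⟩
  add_mem' := by
    rintro a b ⟨k1, n1, h1⟩ ⟨k2, n2, h2⟩
    refine ⟨k1 * (p : ℤ) ^ n2 + k2 * (p : ℤ) ^ n1, n1 + n2, ?_⟩
    push_cast
    calc (a + b) * (p : ℚ) ^ (n1 + n2)
        = a * (p : ℚ) ^ n1 * (p : ℚ) ^ n2 + b * (p : ℚ) ^ n2 * (p : ℚ) ^ n1 := by
          rw [pow_add]; ring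
      _ = (k1 : ℚ) * (p : ℚ) ^ n2 + (k2 : ℚ) * (p : ℚ) ^ n1 := by rw [h1, h2]
  neg_mem' := by
    rintro a ⟨k, n, h⟩
    refine ⟨-k, n, ?_⟩
    push_cast
    rw [neg_mul, h]

lemma one_mem_Zp (p : ℕ) : (1 : ℚ) ∈ Zp p := ⟨1, 0, by norm_num⟩

/-- The group `G_p = ℤ[1/p]² ⋊ ℤ`, realized as triples `(a, b, c)` with the
multiplication `(a₁,b₁,c₁)(a₂,b₂,c₂) = (a₁+a₂+c₁b₂, b₁+b₂, c₁+c₂)`. -/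
abbrev Gp (p : ℕ) : Type := Zp p × Zp p × ℤ

instance Gp.instGroup (p : ℕ) : Group (Gp p) where
  mul x y := ⟨x.1 + y.1 + x.2.2 • y.2.1, x.2.1 + y.2.1, x.2.2 + y.2.2⟩
  one := ⟨0, 0, 0⟩
  inv x := ⟨-x.1 + x.2.2 • x.2.1, -x.2.1, -x.2.2⟩
  mul_assoc x y z := by
    refine Prod.ext ?_ (Prod.ext ?_ ?_)
    · show x.1 + y.1 + x.2.2 • y.2.1 + z.1 + (x.2.2 + y.2.2) • z.2.1 =
        x.1 + (y.1 + z.1 + y.2.2 • z.2.1) + x.2.2 • (y.2.1 + z.2.1)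
      rw [add_smul, smul_add]; abel
    · show x.2.1 + y.2.1 + z.2.1 = x.2.1 + (y.2.1 + z.2.1)
      rw [add_assoc]
    · show x.2.2 + y.2.2 + z.2.2 = x.2.2 + (y.2.2 + z.2.2)
      rw [add_assoc]
  one_mul x := by
    refine Prod.ext ?_ (Prod.ext ?_ ?_)
    · show 0 + x.1 + (0 : ℤ) • x.2.1 = x.1
      simp
    · show 0 + x.2.1 = x.2.1
      simp
    · show 0 + x.2.2 = x.2.2
      simp
  mul_one x := by
    refine Prod.ext ?_ (Prod.ext ?_ ?_)
    · show x.1 + 0 + x.2.2 • (0 : Zp p) = x.1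
      simp
    · show x.2.1 + 0 = x.2.1
      simp
    · show x.2.2 + 0 = x.2.2
      simp
  inv_mul_cancel x := by
    refine Prod.ext ?_ (Prod.ext ?_ ?_)
    · show -x.1 + x.2.2 • x.2.1 + x.1 + (-x.2.2) • x.2.1 = 0
      rw [neg_smul]; abel
    · show -x.2.1 + x.2.1 = 0
      simp
    · show -x.2.2 + x.2.2 = 0
      simp

/-- The normalized trace of an `n × n` complex matrix (`trN n 1 = 1`). -/
noncomputable def trN (n : ℕ) (A : Matrix (Fin n) (Fin n) ℂ) : ℂ :=
  A.trace / n

/-- The subgroup `H_p = {(a, b, 0) : a, b ∈ ℤ} ≤ G_p` (generated by `(1,0,0)` and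
`(0,1,0)`), as a set. -/
def HpSet (p : ℕ) : Set (Gp p) :=
  {g | (∃ k : ℤ, (g.1 : ℚ) = (k : ℚ)) ∧ (∃ k : ℤ, (g.2.1 : ℚ) = (k : ℚ)) ∧ g.2.2 = 0}

/-!
Let `ρ` be an `n`-dimensional unitary representation of `G_p`, and write `a x = (x,0,0)`,
`b x = (0,x,0)`, `t = (0,0,1)`. Each `a x = ⁅t, b x⁆` is central, so on an eigenspace of
`ρ (a x)` (of dimension `d ≤ n`, eigenvalue `μ`) the relation `ρ t ρ (b x) = μ ρ (b x) ρ t`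
gives `μ ^ d = 1` after taking determinants; hence `ρ (a x) ^ n! = 1`. As `a (1/p)` has a
`p ^ s`-th root `a (1/p^(s+1))` for every `s`, the order of `ρ (a (1/p))` is prime to `p`, so
`ρ (a (1/p))` is a power of `ρ (a 1) = ρ (a (1/p)) ^ p`.

Let `Q` be the average of the powers of `ρ (a 1)`, an orthogonal projection. Conjugating by
powers of `ρ t` shows `tr (ρ (a 1) ^ k ρ (b 1)) = tr ρ (b 1)`, so
`tr ρ (b 1) = tr (Q ρ (b 1))` has real part at most `tr Q`; and `ρ (a (1/p))` is the identity
on the range of `Q`, so `Re tr ρ (a (1/p)) ≥ tr Q - (n - tr Q)`. Thus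
`2 Re tr ρ (b 1) - n ≤ Re tr ρ (a (1/p))`. Since `b 1 ∈ H_p` and `a (1/p) ∉ H_p`, normalized
traces converging to `τ` would give `2 - 1 ≤ 0`.
-/

open Module Finset ComplexOrder
open scoped commutatorElement

theorem LinearMap.det_ne_zero_of_injective {K V : Type*} [Field K] [AddCommGroup V] [Module K V]
    [FiniteDimensional K V] {f : End K V} (hf : Function.Injective f) : f.det ≠ 0 :=
  fun h => LinearMap.det_eq_zero_iff_ker_ne_bot.mp h (LinearMap.ker_eq_bot.mpr hf)

namespace Module.End

variable {K V : Type*} [Field K] [AddCommGroup V] [Module K V] [FiniteDimensional K V]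

theorem pow_finrank_eq_one_of_mul_eq_smul_mul {b t : End K V} (hb : Function.Injective b)
    (ht : Function.Injective t) {μ : K} (h : t * b = μ • (b * t)) : μ ^ finrank K V = 1 := by
  have hdet := congrArg LinearMap.det h
  rw [LinearMap.det_smul, map_mul, map_mul, mul_comm b.det] at hdet
  exact (mul_eq_right₀ (mul_ne_zero (LinearMap.det_ne_zero_of_injective ht)
    (LinearMap.det_ne_zero_of_injective hb))).mp hdet.symm

theorem HasEigenvalue.pow_factorial_finrank_eq_one {a b t : End K V} (hab : Commute a b)
    (hat : Commute a t) (hb : Function.Injective b) (ht : Function.Injective t)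
    (h : t * b = a * (b * t)) {μ : K} (hμ : a.HasEigenvalue μ) :
    μ ^ (finrank K V).factorial = 1 := by
  set E := a.eigenspace μ
  have hbE : ∀ x ∈ E, b x ∈ E := mapsTo_genEigenspace_of_comm hab μ 1
  have htE : ∀ x ∈ E, t x ∈ E := mapsTo_genEigenspace_of_comm hat μ 1
  have hrel : t.restrict htE * b.restrict hbE = μ • (b.restrict hbE * t.restrict htE) := by
    ext x
    show t (b x) = μ • b (t x)
    rw [← mul_apply, h]
    exact mem_eigenspace_iff.mp (hbE _ (htE x x.2))
  have hroot := pow_finrank_eq_one_of_mul_eq_smul_mul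
    (fun x y hxy => Subtype.ext (hb (congrArg Subtype.val hxy)))
    (fun x y hxy => Subtype.ext (ht (congrArg Subtype.val hxy))) hrel
  have : Nontrivial E := Submodule.nontrivial_iff_ne_bot.mpr hμ
  obtain ⟨c, hc⟩ := Nat.dvd_factorial Module.finrank_pos (Submodule.finrank_le E)
  rw [hc, pow_mul, hroot, one_pow]

end Module.End

theorem Unitary.pow_eq_one_of_forall_spectrum_pow_eq_one {A : Type*} [CStarAlgebra A] {U : A}
    (hU : U ∈ unitary A) {m : ℕ} (h : ∀ μ ∈ spectrum ℂ U, μ ^ m = 1) : U ^ m = 1 := by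
  have : IsStarNormal U := isStarNormal_of_mem_unitary hU
  calc U ^ m = cfc (fun z : ℂ => z ^ m) U := (cfc_pow_id U m).symm
    _ = cfc (fun _ : ℂ => (1 : ℂ)) U := cfc_congr fun z hz => h z hz
    _ = 1 := cfc_const_one ℂ U

theorem conj_pow_eq_commutatorElement_pow_mul {G : Type*} [Group G] {g h : G}
    (hg : Commute g ⁅g, h⁆) (k : ℕ) : g ^ k * h * (g ^ k)⁻¹ = ⁅g, h⁆ ^ k * h := by
  induction k with
  | zero => simp
  | succ k ih =>
    calc g ^ (k + 1) * h * (g ^ (k + 1))⁻¹ = g * (g ^ k * h * (g ^ k)⁻¹) * g⁻¹ := by group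
      _ = ⁅g, h⁆ ^ k * (g * h * g⁻¹) := by rw [ih, ← mul_assoc, (hg.pow_right k).eq]; group
      _ = ⁅g, h⁆ ^ (k + 1) * h := by rw [pow_succ, commutatorElement_def]; group

section CyclicAverage

variable {A : Type*} [Ring A] [Algebra ℂ A] {U : A} {m : ℕ}

noncomputable def cyclicAverage (U : A) (m : ℕ) : A := (m : ℂ)⁻¹ • ∑ k ∈ range m, U ^ k

theorem pow_mul_cyclicAverage (hUm : U ^ m = 1) (j : ℕ) :
    U ^ j * cyclicAverage U m = cyclicAverage U m := by
  have hU : U * ∑ k ∈ range m, U ^ k = ∑ k ∈ range m, U ^ k := by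
    rw [← sub_eq_zero, ← sub_one_mul, mul_geom_sum, hUm, sub_self]
  induction j with
  | zero => rw [pow_zero, one_mul]
  | succ j ih => rw [pow_succ, mul_assoc, cyclicAverage, mul_smul_comm, hU, ← cyclicAverage, ih]

theorem smul_sum_mul_cyclicAverage (hm : 0 < m) {f : ℕ → A}
    (hf : ∀ k, f k * cyclicAverage U m = cyclicAverage U m) :
    ((m : ℂ)⁻¹ • ∑ k ∈ range m, f k) * cyclicAverage U m = cyclicAverage U m := by
  rw [smul_mul_assoc, sum_mul, sum_congr rfl fun k _ => hf k, sum_const, card_range,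
    ← Nat.cast_smul_eq_nsmul ℂ, smul_smul, inv_mul_cancel₀ (by exact_mod_cast hm.ne'),
    one_smul]

theorem isStarProjection_cyclicAverage [StarRing A] [StarModule ℂ A] (hU : U ∈ unitary A)
    (hm : 0 < m) (hUm : U ^ m = 1) : IsStarProjection (cyclicAverage U m) := by
  have hstar : star (cyclicAverage U m) * cyclicAverage U m = cyclicAverage U m := by
    nth_rw 1 [cyclicAverage]
    rw [star_smul, star_sum, star_inv₀, star_natCast]
    refine smul_sum_mul_cyclicAverage hm fun k => ?_
    rw [← pow_mul_cyclicAverage hUm k, ← mul_assoc,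
      Unitary.star_mul_self_of_mem (pow_mem hU k), one_mul, pow_mul_cyclicAverage hUm]
  refine ⟨?_, ?_⟩
  · nth_rw 1 [cyclicAverage]
    exact smul_sum_mul_cyclicAverage hm (pow_mul_cyclicAverage hUm)
  · rw [IsSelfAdjoint, ← hstar, star_mul, star_star]

end CyclicAverage

namespace Matrix

variable {n : Type*} [Fintype n] [DecidableEq n]

theorem re_trace_mul_le_of_isStarProjection {P U : Matrix n n ℂ} (hP : IsStarProjection P)
    (hU : U ∈ unitary (Matrix n n ℂ)) : (P * U).trace.re ≤ P.trace.re := by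
  have hPh : Pᴴ = P := hP.isSelfAdjoint
  have hUU : U * Uᴴ = 1 := Unitary.mul_star_self_of_mem hU
  -- `0 ≤ tr (Xᴴ X) = 2 (tr P - Re tr (P U))` for `X = P (1 - U)`
  have hexpand : (P * (1 - U))ᴴ * (P * (1 - U)) = P - P * U - Uᴴ * P + Uᴴ * P * U := by
    rw [conjTranspose_mul, hPh, conjTranspose_sub, conjTranspose_one, mul_assoc, ← mul_assoc P,
      hP.isIdempotentElem.eq]
    noncomm_ring
  have hconj : (Uᴴ * P * U).trace = P.trace := by
    rw [trace_mul_comm, ← mul_assoc, hUU, one_mul]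
  have hstar : (Uᴴ * P).trace = star (P * U).trace := by
    rw [← trace_conjTranspose, conjTranspose_mul, hPh]
  have hnonneg := Complex.nonneg_iff.mp
    (posSemidef_conjTranspose_mul_self (P * (1 - U))).trace_nonneg
  rw [hexpand, trace_add, trace_sub, trace_sub, hconj, hstar] at hnonneg
  simp only [Complex.add_re, Complex.sub_re, Complex.star_def, Complex.conj_re] at hnonneg
  linarith [hnonneg.1]

theorem trace_cyclicAverage_mul {A B : Matrix n n ℂ} {m : ℕ} (hm : 0 < m)
    (htr : ∀ k, (A ^ k * B).trace = B.trace) : (cyclicAverage A m * B).trace = B.trace := by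
  rw [cyclicAverage, smul_mul_assoc, trace_smul, sum_mul, trace_sum,
    sum_congr rfl fun k _ => htr k, sum_const, card_range, ← Nat.cast_smul_eq_nsmul ℂ,
    smul_smul, inv_mul_cancel₀ (by exact_mod_cast hm.ne'), one_smul]

theorem two_mul_re_trace_sub_card_le_re_trace_pow {A B : Matrix n n ℂ}
    (hA : A ∈ unitary (Matrix n n ℂ)) (hB : B ∈ unitary (Matrix n n ℂ)) {m : ℕ}
    (hm : 0 < m) (hAm : A ^ m = 1) (htr : ∀ k, (A ^ k * B).trace = B.trace) (u : ℕ) :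
    2 * B.trace.re - Fintype.card n ≤ (A ^ u).trace.re := by
  set Q := cyclicAverage A m
  have hQ : IsStarProjection Q := isStarProjection_cyclicAverage hA hm hAm
  have hsplit : (A ^ u).trace = Q.trace + ((1 - Q) * A ^ u).trace := by
    calc (A ^ u).trace = (A ^ u * Q).trace + (A ^ u * (1 - Q)).trace := by
          rw [← trace_add, ← mul_add, add_sub_cancel, mul_one]
      _ = Q.trace + ((1 - Q) * A ^ u).trace := by rw [pow_mul_cyclicAverage hAm, trace_mul_comm]
  have hBQ : B.trace.re ≤ Q.trace.re :=
    trace_cyclicAverage_mul hm htr ▸ re_trace_mul_le_of_isStarProjection hQ hB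
  have hAQ := re_trace_mul_le_of_isStarProjection hQ.one_sub
    (-(⟨A ^ u, pow_mem hA u⟩ : unitary (Matrix n n ℂ))).2
  rw [Unitary.coe_neg, mul_neg, trace_neg, trace_sub, trace_one] at hAQ
  simp only [Complex.neg_re, Complex.sub_re, Complex.natCast_re] at hAQ
  rw [hsplit, Complex.add_re]
  linarith

namespace UnitaryGroup

theorem trace_conj (w v : unitaryGroup n ℂ) :
    ((w * v * w⁻¹ : unitaryGroup n ℂ) : Matrix n n ℂ).trace =
      (v : Matrix n n ℂ).trace := by
  rw [mul_val, mul_val, inv_val, trace_mul_comm, ← mul_assoc, star_mul_self, one_mul]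

-- The L2 operator norm makes `Matrix n n ℂ` a C⋆-algebra, so the functional calculus applies.
open scoped Matrix.Norms.L2Operator in
theorem commutatorElement_pow_factorial_eq_one {u v : unitaryGroup n ℂ}
    (hu : Commute u ⁅u, v⁆) (hv : Commute v ⁅u, v⁆) :
    ⁅u, v⁆ ^ (Fintype.card n).factorial = 1 := by
  let f : unitaryGroup n ℂ →* End ℂ (n → ℂ) :=
    (toLinAlgEquiv' : Matrix n n ℂ ≃ₐ[ℂ] _).toMonoidHom.comp (unitaryGroup n ℂ).subtype
  have hinj (w) : Function.Injective (f w) := ((End.isUnit_iff _).1 ((Group.isUnit w).map f)).1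
  have hrel : f u * f v = f ⁅u, v⁆ * (f v * f u) := by
    have hgroup : u * v = ⁅u, v⁆ * (v * u) := by rw [commutatorElement_def]; group
    rw [← map_mul, ← map_mul, ← map_mul, hgroup]
  apply Subtype.ext
  rw [SubmonoidClass.coe_pow, OneMemClass.coe_one]
  refine Unitary.pow_eq_one_of_forall_spectrum_pow_eq_one ⁅u, v⁆.2 fun μ hμ => ?_
  rw [← Module.finrank_fintype_fun_eq_card ℂ]
  refine End.HasEigenvalue.pow_factorial_finrank_eq_one (hv.map f).symm (hu.map f).symm
    (hinj v) (hinj u) hrel ?_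
  rw [End.hasEigenvalue_iff_mem_spectrum]
  show μ ∈ spectrum ℂ (toLinAlgEquiv' ((⁅u, v⁆ : unitaryGroup n ℂ) : Matrix n n ℂ))
  rwa [AlgEquiv.spectrum_eq]

theorem two_mul_re_trace_sub_card_le_re_trace_commutatorElement_pow {u v : unitaryGroup n ℂ}
    (hu : Commute u ⁅u, v⁆) (hv : Commute v ⁅u, v⁆) (k : ℕ) :
    2 * (v : Matrix n n ℂ).trace.re - Fintype.card n ≤
      ((⁅u, v⁆ ^ k : unitaryGroup n ℂ) : Matrix n n ℂ).trace.re := by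
  have htr (j : ℕ) : (((⁅u, v⁆ : unitaryGroup n ℂ) : Matrix n n ℂ) ^ j * v).trace =
      (v : Matrix n n ℂ).trace := by
    rw [← SubmonoidClass.coe_pow, ← mul_val, ← conj_pow_eq_commutatorElement_pow_mul hu,
      trace_conj]
  rw [SubmonoidClass.coe_pow]
  refine two_mul_re_trace_sub_card_le_re_trace_pow ⁅u, v⁆.2 v.2
    (Nat.factorial_pos (Fintype.card n)) ?_ htr k
  rw [← SubmonoidClass.coe_pow, commutatorElement_pow_factorial_eq_one hu hv, one_val]

end UnitaryGroup

end Matrix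

namespace Zp

variable {p : ℕ}

def invPow (hp : p ≠ 0) (j : ℕ) : Zp p :=
  ⟨((p : ℚ) ^ j)⁻¹, 1, j, by
    rw [inv_mul_cancel₀ (by exact_mod_cast pow_ne_zero j hp), Int.cast_one]⟩

theorem coe_invPow (hp : p ≠ 0) (j : ℕ) : (invPow hp j : ℚ) = ((p : ℚ) ^ j)⁻¹ := rfl

theorem pow_nsmul_invPow (hp : p ≠ 0) (i j : ℕ) :
    (p ^ i) • invPow hp (i + j) = invPow hp j := by
  ext
  rw [AddSubgroup.coe_nsmul, coe_invPow, coe_invPow, nsmul_eq_mul, pow_add]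
  push_cast
  field_simp

end Zp

theorem re_trN (n : ℕ) (M : Matrix (Fin n) (Fin n) ℂ) : (trN n M).re = M.trace.re / n := by
  rw [trN, Complex.div_natCast_re]

namespace Gp

open Zp Matrix

variable {p : ℕ}

theorem mul_def (x y : Gp p) :
    x * y = (x.1 + y.1 + x.2.2 • y.2.1, x.2.1 + y.2.1, x.2.2 + y.2.2) := rfl

theorem inv_def (x : Gp p) : x⁻¹ = (-x.1 + x.2.2 • x.2.1, -x.2.1, -x.2.2) := rfl

def a (x : Zp p) : Gp p := (x, 0, 0)

def b (x : Zp p) : Gp p := (0, x, 0)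

def t (p : ℕ) : Gp p := (0, 0, 1)

theorem commute_a (x : Zp p) (g : Gp p) : Commute (a x) g := by
  simp [Commute, SemiconjBy, mul_def, a, add_comm]

theorem a_nsmul (x : Zp p) (k : ℕ) : a (k • x) = a x ^ k := by
  induction k with
  | zero => rw [zero_smul, pow_zero]; rfl
  | succ k ih => rw [succ_nsmul, pow_succ, ← ih]; simp [mul_def, a]

theorem commutatorElement_t_b (x : Zp p) : ⁅t p, b x⁆ = a x := by
  simp [commutatorElement_def, mul_def, inv_def, a, b, t]

theorem b_invPow_zero_mem_HpSet (hp : p ≠ 0) : b (invPow hp 0) ∈ HpSet p :=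
  ⟨⟨0, rfl⟩, ⟨1, by rw [b, coe_invPow, pow_zero, inv_one, Int.cast_one]⟩, rfl⟩

theorem a_invPow_one_not_mem_HpSet (hp : p.Prime) : a (invPow hp.ne_zero 1) ∉ HpSet p := by
  rintro ⟨⟨k, hk⟩, -, -⟩
  have hpk : (p : ℚ) * k = 1 := by
    rw [← hk, a, coe_invPow, pow_one, mul_inv_cancel₀ (by exact_mod_cast hp.ne_zero)]
  have hpk' : (p : ℤ) * k = 1 := by exact_mod_cast hpk
  exact hp.one_lt.ne' (by exact_mod_cast Int.eq_one_of_mul_eq_one_right (by positivity) hpk')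

section Representation

variable {n : Type*} [Fintype n] [DecidableEq n]

theorem map_commutatorElement_t_b (ρ : Gp p →* unitaryGroup n ℂ) (x : Zp p) :
    ⁅ρ (t p), ρ (b x)⁆ = ρ (a x) := by
  rw [← map_commutatorElement, commutatorElement_t_b]

theorem commute_map_commutatorElement_t_b (ρ : Gp p →* unitaryGroup n ℂ) (x : Zp p)
    (g : Gp p) : Commute (ρ g) ⁅ρ (t p), ρ (b x)⁆ := by
  rw [map_commutatorElement_t_b]
  exact ((commute_a x g).map ρ).symm

theorem map_a_pow_factorial_eq_one (ρ : Gp p →* unitaryGroup n ℂ) (x : Zp p) :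
    ρ (a x) ^ (Fintype.card n).factorial = 1 := by
  rw [← map_commutatorElement_t_b]
  exact UnitaryGroup.commutatorElement_pow_factorial_eq_one
    (commute_map_commutatorElement_t_b ρ x _) (commute_map_commutatorElement_t_b ρ x _)

theorem coprime_orderOf_map_a_invPow_one (hp : p.Prime) (ρ : Gp p →* unitaryGroup n ℂ) :
    p.Coprime (orderOf (ρ (a (invPow hp.ne_zero 1)))) := by
  obtain ⟨s, m, hpm, hfac⟩ :=
    Nat.exists_eq_pow_mul_and_not_dvd (Nat.factorial_ne_zero (Fintype.card n)) p hp.ne_one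
  have hm : ρ (a (invPow hp.ne_zero 1)) ^ m = 1 := by
    rw [← pow_nsmul_invPow hp.ne_zero s 1, a_nsmul, map_pow, ← pow_mul, ← hfac,
      map_a_pow_factorial_eq_one]
  exact ((Nat.Prime.coprime_iff_not_dvd hp).2 hpm).coprime_dvd_right (orderOf_dvd_of_pow_eq_one hm)

theorem two_mul_re_trace_sub_card_le (hp : p.Prime) (ρ : Gp p →* unitaryGroup n ℂ) :
    2 * (ρ (b (invPow hp.ne_zero 0)) : Matrix n n ℂ).trace.re - Fintype.card n ≤
      (ρ (a (invPow hp.ne_zero 1)) : Matrix n n ℂ).trace.re := by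
  obtain ⟨k, hk⟩ := exists_pow_eq_self_of_coprime (coprime_orderOf_map_a_invPow_one hp ρ)
  have hpow : ρ (a (invPow hp.ne_zero 1)) ^ p = ρ (a (invPow hp.ne_zero 0)) := by
    have h := pow_nsmul_invPow hp.ne_zero 1 0
    rw [pow_one] at h
    rw [← map_pow, ← a_nsmul]
    exact congrArg (fun x => ρ (a x)) h
  rw [← hk, hpow, ← map_commutatorElement_t_b]
  exact UnitaryGroup.two_mul_re_trace_sub_card_le_re_trace_commutatorElement_pow
    (commute_map_commutatorElement_t_b ρ _ _) (commute_map_commutatorElement_t_b ρ _ _) k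

end Representation

theorem two_mul_re_trN_sub_one_le (hp : p.Prime) {n : ℕ} (hn : 0 < n)
    (ρ : Gp p →* unitaryGroup (Fin n) ℂ) :
    2 * (trN n (ρ (b (invPow hp.ne_zero 0)))).re - 1 ≤
      (trN n (ρ (a (invPow hp.ne_zero 1)))).re := by
  have h := two_mul_re_trace_sub_card_le hp ρ
  rw [Fintype.card_fin] at h
  have hn' : (0 : ℝ) < n := by exact_mod_cast hn
  rw [re_trN, re_trN,
    show ∀ x : ℝ, 2 * (x / n) - 1 = (2 * x - n) / n from fun x => by field_simp]
  gcongr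

end Gp

theorem Hp_trace_not_limit_of_fd_traces_overgroup_general (p : ℕ) (hp : p.Prime)
    (K : Type) [Group K] (ι : Gp p →* K) (hι : Function.Injective ι) :
    ¬ ∃ (n : ℕ → ℕ) (σ : ∀ k, K →* Matrix.unitaryGroup (Fin (n k)) ℂ),
        (∀ k, 0 < n k) ∧
        ∀ g : K,
          (g ∈ ι '' HpSet p → Tendsto (fun k => trN (n k) (σ k g)) atTop (nhds 1)) ∧
          (g ∉ ι '' HpSet p → Tendsto (fun k => trN (n k) (σ k g)) atTop (nhds 0)) := by
  rintro ⟨n, σ, hn, hlim⟩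
  have hB := (hlim (ι (Gp.b (Zp.invPow hp.ne_zero 0)))).1
    ⟨_, Gp.b_invPow_zero_mem_HpSet hp.ne_zero, rfl⟩
  have hA := (hlim (ι (Gp.a (Zp.invPow hp.ne_zero 1)))).2 fun ⟨g, hg, hgι⟩ =>
    Gp.a_invPow_one_not_mem_HpSet hp (hι hgι ▸ hg)
  have hle := le_of_tendsto_of_tendsto'
    ((((Complex.continuous_re.tendsto _).comp hB).const_mul 2).sub_const 1)
    ((Complex.continuous_re.tendsto _).comp hA)
    fun k => Gp.two_mul_re_trN_sub_one_le hp (hn k) ((σ k).comp ι)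
  norm_num at hle

/-- if `G_p` embeds in a group `K` with the image of `H_p` normal in `K`,
then the trace `τ = 1_{ι(H_p)}` on `K` is not a pointwise limit of finite-dimensional
traces of `K`. -/
theorem Hp_trace_not_limit_of_fd_traces_overgroup (p : ℕ) (hp : p.Prime)
    (K : Type) [Group K] (ι : Gp p →* K) (hι : Function.Injective ι)
    (hnormal : ∀ x ∈ ι '' HpSet p, ∀ k : K, k * x * k⁻¹ ∈ ι '' HpSet p) :
    ¬ ∃ (n : ℕ → ℕ) (σ : ∀ k, K →* Matrix.unitaryGroup (Fin (n k)) ℂ),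
        (∀ k, 0 < n k) ∧
        ∀ g : K,
          (g ∈ ι '' HpSet p → Tendsto (fun k => trN (n k) (σ k g)) atTop (nhds 1)) ∧
          (g ∉ ι '' HpSet p → Tendsto (fun k => trN (n k) (σ k g)) atTop (nhds 0)) :=
  Hp_trace_not_limit_of_fd_traces_overgroup_general p hp K ι hι
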